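/- Let g₁, ..., g_m : ℝ^n → ℝ be convex and twice continuously differentiable, and suppose the Jacobian of g = (g₁,...,g_m) at z has full column rank. Then the Hessian of z ↦ LSE_ε⁺(g₁(z), ..., g_m(z)) at z is positive definite, for any ε > 0. -/

import Mathlib

/-!
Restrict to a line `t ↦ z + t • v`. Along it the second derivative of `lsePlus ε ∘ g` is
`ε (∑ wₖ aₖ² - (∑ wₖ aₖ)²) + ∑ wₖ bₖ`, where the weights `wₖ = ∂ₖ lsePlus > 0` sum to less
than `1`, `aₖ` is the derivative of `gₖ` along `v` and `bₖ ≥ 0` its second derivative (by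
convexity). Weighted Cauchy–Schwarz and `∑ wₖ < 1` make the first term positive as soon as some
`aₖ ≠ 0`, which is what injectivity of the Jacobian gives for `v ≠ 0`.
-/

open Real Matrix

section Line

variable {E F : Type*} [NormedAddCommGroup E] [NormedSpace ℝ E] [NormedAddCommGroup F]
  [NormedSpace ℝ F] {z v : E}

lemma ContDiffAt.differentiableAt_fderiv {f : E → F} (hf : ContDiffAt ℝ 2 f z) :
    DifferentiableAt ℝ (fderiv ℝ f) z :=
  (hf.fderiv_right (m := 1) le_rfl).differentiableAt one_ne_zero

lemma hasDerivAt_comp_add_smul {f : E → F} {t : ℝ} (hf : DifferentiableAt ℝ f (z + t • v)) :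
    HasDerivAt (fun s : ℝ => f (z + s • v)) (fderiv ℝ f (z + t • v) v) t :=
  hf.hasFDerivAt.comp_hasDerivAt t
    (((hasDerivAt_id t).smul_const v).const_add z |>.congr_deriv (one_smul ℝ v))

lemma hasDerivAt_fderiv_comp_add_smul {f : E → F} (hf : DifferentiableAt ℝ (fderiv ℝ f) z) :
    HasDerivAt (fun t : ℝ => fderiv ℝ f (z + t • v) v) (fderiv ℝ (fderiv ℝ f) z v v) 0 := by
  have hf₀ : DifferentiableAt ℝ (fderiv ℝ f) (z + (0 : ℝ) • v) := by simpa using hf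
  simpa using (hasDerivAt_comp_add_smul hf₀).clm_apply (hasDerivAt_const 0 v)

lemma deriv_deriv_comp_add_smul {f : E → F} (hf : Differentiable ℝ f)
    (hf' : DifferentiableAt ℝ (fderiv ℝ f) z) :
    deriv (deriv fun t : ℝ => f (z + t • v)) 0 = fderiv ℝ (fderiv ℝ f) z v v := by
  have hderiv : deriv (fun t : ℝ => f (z + t • v)) = fun t => fderiv ℝ f (z + t • v) v :=
    funext fun t => (hasDerivAt_comp_add_smul (hf _)).deriv
  rw [hderiv, (hasDerivAt_fderiv_comp_add_smul hf').deriv]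

lemma ConvexOn.fderiv_fderiv_apply_self_nonneg {f : E → ℝ} (hconv : ConvexOn ℝ Set.univ f)
    (hf : Differentiable ℝ f) (hf' : DifferentiableAt ℝ (fderiv ℝ f) z) :
    0 ≤ fderiv ℝ (fderiv ℝ f) z v v := by
  have hline : ConvexOn ℝ Set.univ fun t : ℝ => f (z + t • v) := by
    simpa [Function.comp_def, AffineMap.lineMap_apply, add_comm]
      using hconv.comp_affineMap (AffineMap.lineMap z (z + v))
  have hmono : Monotone fun t : ℝ => fderiv ℝ f (z + t • v) v := by
    have := hline.monotoneOn_deriv fun t _ => (hasDerivAt_comp_add_smul (hf _)).differentiableAt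
    simpa [funext fun t => (hasDerivAt_comp_add_smul (v := v) (hf (z + t • v))).deriv] using this
  exact (hasDerivAt_fderiv_comp_add_smul hf').nonneg_of_monotone hmono

end Line

section HessianMatrix

variable {ι : Type*} [Fintype ι] [DecidableEq ι]

lemma dotProduct_mulVec_of_apply_single (B : (ι → ℝ) →L[ℝ] (ι → ℝ) →L[ℝ] ℝ) (x : ι → ℝ) :
    x ⬝ᵥ (Matrix.of (fun i j => B (Pi.single i 1) (Pi.single j 1)) *ᵥ x) = B x x := by
  have hB : Matrix.of (fun i j => B (Pi.single i 1) (Pi.single j 1)) =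
      LinearMap.toMatrix₂' ℝ B.toLinearMap₁₂ := by
    ext i j
    simp [LinearMap.toMatrix₂'_apply]
  rw [hB, ← Matrix.toLinearMap₂'_apply', Matrix.toLinearMap₂'_toMatrix']
  simp

lemma posDef_of_fderiv_fderiv_apply_self_pos {f : (ι → ℝ) → ℝ} {z : ι → ℝ}
    (hf : ContDiffAt ℝ 2 f z) (hpos : ∀ v ≠ 0, 0 < fderiv ℝ (fderiv ℝ f) z v v) :
    (Matrix.of fun i j =>
      fderiv ℝ (fun w => fderiv ℝ f w (Pi.single j 1)) z (Pi.single i 1)).PosDef := by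
  have hsymm : IsSymmSndFDerivAt ℝ f z := hf.isSymmSndFDerivAt (by simp)
  have hentry (u v : ι → ℝ) :
      fderiv ℝ (fun w => fderiv ℝ f w u) z v = fderiv ℝ (fderiv ℝ f) z v u := by
    simp [fderiv_clm_apply hf.differentiableAt_fderiv (differentiableAt_const u)]
  simp only [hentry]
  refine posDef_iff_dotProduct_mulVec.2 ⟨?_, fun x hx => ?_⟩
  · ext i j
    exact hsymm _ _
  · simpa [dotProduct_mulVec_of_apply_single] using hpos x hx

end HessianMatrix

lemma sq_sum_mul_lt_sum_mul_sq {ι : Type*} [Fintype ι] {w a : ι → ℝ} (hw : ∀ i, 0 < w i)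
    (hw₁ : ∑ i, w i < 1) (ha : ∃ i, a i ≠ 0) :
    (∑ i, w i * a i) ^ 2 < ∑ i, w i * a i ^ 2 := by
  obtain ⟨i₀, hi₀⟩ := ha
  have hpos : 0 < ∑ i, w i * a i ^ 2 :=
    Finset.sum_pos' (fun i _ => by have := hw i; positivity)
      ⟨i₀, Finset.mem_univ _, by have := hw i₀; positivity⟩
  have hcs : (∑ i, w i * a i) ^ 2 ≤ (∑ i, w i) * ∑ i, w i * a i ^ 2 :=
    Finset.sum_sq_le_sum_mul_sum_of_sq_le_mul _ (fun i _ => (hw i).le)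
      (fun i _ => by have := hw i; positivity) fun i _ => by ring_nf; rfl
  nlinarith

section LSEPlus

variable {ι : Type*} [Fintype ι] (ε : ℝ)

noncomputable def lsePlus (y : ι → ℝ) : ℝ := 1 / ε * log (1 + ∑ i, exp (ε * y i))

noncomputable def lsePlusGrad (y : ι → ℝ) (i : ι) : ℝ :=
  exp (ε * y i) / (1 + ∑ j, exp (ε * y j))

lemma one_add_sum_exp_pos (y : ι → ℝ) : 0 < 1 + ∑ i, exp (ε * y i) := by
  positivity

lemma lsePlusGrad_pos (y : ι → ℝ) (i : ι) : 0 < lsePlusGrad ε y i :=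
  div_pos (exp_pos _) (one_add_sum_exp_pos ε y)

lemma sum_lsePlusGrad_lt_one (y : ι → ℝ) : ∑ i, lsePlusGrad ε y i < 1 := by
  simp only [lsePlusGrad]
  rw [← Finset.sum_div, div_lt_one (one_add_sum_exp_pos ε y)]
  exact lt_one_add _

lemma contDiff_lsePlus {n : WithTop ℕ∞} : ContDiff ℝ n (lsePlus (ι := ι) ε) := by
  refine contDiff_const.mul (ContDiff.log ?_ fun y => (one_add_sum_exp_pos ε y).ne')
  fun_prop

variable {ε} {ψ : ι → ℝ → ℝ} {t : ℝ}

lemma hasDerivAt_one_add_sum_exp {ψ' : ι → ℝ} (hψ : ∀ i, HasDerivAt (ψ i) (ψ' i) t) :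
    HasDerivAt (fun s => 1 + ∑ i, exp (ε * ψ i s)) (∑ i, exp (ε * ψ i t) * (ε * ψ' i)) t :=
  (HasDerivAt.fun_sum fun i _ => ((hψ i).const_mul ε).exp).const_add 1

lemma hasDerivAt_lsePlus_comp {ψ' : ι → ℝ} (hε : ε ≠ 0) (hψ : ∀ i, HasDerivAt (ψ i) (ψ' i) t) :
    HasDerivAt (fun s => lsePlus ε fun i => ψ i s)
      (∑ i, lsePlusGrad ε (fun j => ψ j t) i * ψ' i) t := by
  refine (((hasDerivAt_one_add_sum_exp hψ).log
    (one_add_sum_exp_pos ε _).ne').const_mul (1 / ε)).congr_deriv ?_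
  simp only [lsePlusGrad, Finset.sum_div, Finset.mul_sum]
  refine Finset.sum_congr rfl fun i _ => ?_
  field_simp

lemma hasDerivAt_lsePlusGrad_comp {ψ' : ι → ℝ} (hψ : ∀ i, HasDerivAt (ψ i) (ψ' i) t) (i : ι) :
    HasDerivAt (fun s => lsePlusGrad ε (fun j => ψ j s) i)
      (ε * lsePlusGrad ε (fun j => ψ j t) i *
        (ψ' i - ∑ j, lsePlusGrad ε (fun j => ψ j t) j * ψ' j)) t := by
  refine ((((hψ i).const_mul ε).exp).fun_div (hasDerivAt_one_add_sum_exp hψ)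
    (one_add_sum_exp_pos ε _).ne').congr_deriv ?_
  have hS := (one_add_sum_exp_pos ε fun j => ψ j t).ne'
  simp only [lsePlusGrad, div_mul_eq_mul_div, ← Finset.sum_div]
  simp only [mul_left_comm _ ε, ← Finset.mul_sum]
  field_simp

lemma hasDerivAt_sum_lsePlusGrad_mul {ψ' : ι → ℝ → ℝ} {ψ'' : ι → ℝ}
    (hψ : ∀ i, HasDerivAt (ψ i) (ψ' i t) t) (hψ' : ∀ i, HasDerivAt (ψ' i) (ψ'' i) t) :
    HasDerivAt (fun s => ∑ i, lsePlusGrad ε (fun j => ψ j s) i * ψ' i s)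
      (ε * (∑ i, lsePlusGrad ε (fun j => ψ j t) i * ψ' i t ^ 2 -
          (∑ i, lsePlusGrad ε (fun j => ψ j t) i * ψ' i t) ^ 2) +
        ∑ i, lsePlusGrad ε (fun j => ψ j t) i * ψ'' i) t := by
  refine (HasDerivAt.fun_sum fun i _ =>
    (hasDerivAt_lsePlusGrad_comp hψ i).mul (hψ' i)).congr_deriv ?_
  set w := lsePlusGrad ε fun j => ψ j t
  set m := ∑ i, w i * ψ' i t
  calc ∑ i, (ε * w i * (ψ' i t - m) * ψ' i t + w i * ψ'' i)
      = ε * (∑ i, w i * ψ' i t ^ 2 - m * ∑ i, w i * ψ' i t) + ∑ i, w i * ψ'' i := by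
        simp only [Finset.sum_add_distrib, Finset.mul_sum, ← Finset.sum_sub_distrib]
        congr 1
        exact Finset.sum_congr rfl fun i _ => by ring
    _ = _ := by rw [sq m]

theorem deriv_deriv_lsePlus_comp_pos (hε : 0 < ε) {ψ' : ι → ℝ → ℝ} {ψ'' : ι → ℝ}
    (hψ : ∀ i s, HasDerivAt (ψ i) (ψ' i s) s) (hψ' : ∀ i, HasDerivAt (ψ' i) (ψ'' i) t)
    (hψ'' : ∀ i, 0 ≤ ψ'' i) (hdeg : ∃ i, ψ' i t ≠ 0) :
    0 < deriv (deriv fun s => lsePlus ε fun i => ψ i s) t := by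
  have hderiv : deriv (fun s => lsePlus ε fun i => ψ i s) =
      fun s => ∑ i, lsePlusGrad ε (fun j => ψ j s) i * ψ' i s :=
    funext fun s => (hasDerivAt_lsePlus_comp hε.ne' (hψ · s)).deriv
  rw [hderiv, (hasDerivAt_sum_lsePlusGrad_mul (hψ · t) hψ').deriv]
  have hvar := sq_sum_mul_lt_sum_mul_sq (lsePlusGrad_pos ε fun j => ψ j t)
    (sum_lsePlusGrad_lt_one ε _) hdeg
  have hconv : 0 ≤ ∑ i, lsePlusGrad ε (fun j => ψ j t) i * ψ'' i :=
    Finset.sum_nonneg fun i _ => mul_nonneg (lsePlusGrad_pos ε _ i).le (hψ'' i)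
  nlinarith [mul_pos hε (sub_pos.2 hvar)]

end LSEPlus

theorem stmt_14 (n m : ℕ) (ε : ℝ) (hε : 0 < ε)
    (g : Fin m → (Fin n → ℝ) → ℝ)
    (hgconv : ∀ i, ConvexOn ℝ Set.univ (g i))
    (hg : ∀ i, ContDiff ℝ 2 (g i))
    (z : Fin n → ℝ)
    (hrank : ∀ v : Fin n → ℝ,
      (fderiv ℝ (fun u : Fin n → ℝ => fun i => g i u) z) v = 0 → v = 0) :
    (Matrix.of (fun i j : Fin n =>
      fderiv ℝ (fun w =>
        fderiv ℝ (fun u : Fin n → ℝ =>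
          (1 / ε) * Real.log (1 + ∑ k, Real.exp (ε * g k u))) w (Pi.single j 1)) z
        (Pi.single i 1))).PosDef := by
  have hg₁ (k : Fin m) : Differentiable ℝ (g k) := (hg k).differentiable two_ne_zero
  have hg₂ (k : Fin m) : DifferentiableAt ℝ (fderiv ℝ (g k)) z :=
    (hg k).contDiffAt.differentiableAt_fderiv
  have hf : ContDiff ℝ 2 fun u => lsePlus ε fun k => g k u :=
    (contDiff_lsePlus ε).comp (contDiff_pi.2 hg)
  refine posDef_of_fderiv_fderiv_apply_self_pos (f := fun u => lsePlus ε fun k => g k u)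
    hf.contDiffAt fun v hv => ?_
  rw [← deriv_deriv_comp_add_smul (hf.differentiable two_ne_zero)
    hf.contDiffAt.differentiableAt_fderiv]
  refine deriv_deriv_lsePlus_comp_pos hε (fun k s => hasDerivAt_comp_add_smul (hg₁ k _))
    (fun k => hasDerivAt_fderiv_comp_add_smul (hg₂ k))
    (fun k => (hgconv k).fderiv_fderiv_apply_self_nonneg (hg₁ k) (hg₂ k)) ?_
  by_contra! hdeg
  refine hv (hrank v ?_)
  ext k
  simpa [fderiv_pi fun k => (hg₁ k).differentiableAt] using hdeg k
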